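/- arXiv:1111.2812 — 2 statements merged into one kernel-verified Lean document; each statement's English description precedes it below -/
import Mathlib

section
/- Let (X,d) be a compact metric space and let f : X → X be continuous. If f has h-shadowing (on all of X), then f has s-limit shadowing and limit shadowing (on all of X). -/
open Metric Filter Topology Set

section Defs

variable {X : Type*} [MetricSpace X]

/-- `x` is a `δ`-pseudo-orbit for `f`. -/
def IsPseudoOrbit (f : X → X) (δ : ℝ) (x : ℕ → X) : Prop :=
  ∀ n : ℕ, dist (f (x n)) (x (n + 1)) < δ

/-- `x` is an asymptotic pseudo-orbit for `f`. -/
def IsAsymptoticOrbit (f : X → X) (x : ℕ → X) : Prop :=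
  Filter.Tendsto (fun n => dist (f (x n)) (x (n + 1))) Filter.atTop (nhds 0)

/-- the point `y` `ε`-shadows the sequence `x`. -/
def Shadows (f : X → X) (ε : ℝ) (y : X) (x : ℕ → X) : Prop :=
  ∀ n : ℕ, dist (f^[n] y) (x n) < ε

/-- the point `y` asymptotically shadows the sequence `x`. -/
def AsympShadows (f : X → X) (y : X) (x : ℕ → X) : Prop :=
  Filter.Tendsto (fun n => dist (f^[n] y) (x n)) Filter.atTop (nhds 0)

/-- `f` has shadowing on `Y`. -/
def ShadowingOn (f : X → X) (Y : Set X) : Prop :=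
  ∀ ε > 0, ∃ δ > 0, ∀ x : ℕ → X, (∀ n, x n ∈ Y) → IsPseudoOrbit f δ x →
    ∃ y : X, Shadows f ε y x

/-- `f` has h-shadowing on `Y`. -/
def HShadowingOn (f : X → X) (Y : Set X) : Prop :=
  ∀ ε > 0, ∃ δ > 0, ∀ (x : ℕ → X) (m : ℕ), (∀ i ≤ m, x i ∈ Y) →
    (∀ i < m, dist (f (x i)) (x (i + 1)) < δ) →
    ∃ y : X, (∀ i < m, dist (f^[i] y) (x i) < ε) ∧ f^[m] y = x m

/-- `f` has limit shadowing on `Y`. -/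
def LimitShadowingOn (f : X → X) (Y : Set X) : Prop :=
  ∀ x : ℕ → X, (∀ n, x n ∈ Y) → IsAsymptoticOrbit f x → ∃ y : X, AsympShadows f y x

/-- `f` has s-limit shadowing on `Y`. -/
def SLimitShadowingOn (f : X → X) (Y : Set X) : Prop :=
  ∀ ε > 0, ∃ δ > 0,
    (∀ x : ℕ → X, (∀ n, x n ∈ Y) → IsPseudoOrbit f δ x → ∃ y : X, Shadows f ε y x) ∧
    (∀ x : ℕ → X, (∀ n, x n ∈ Y) → IsPseudoOrbit f δ x → IsAsymptoticOrbit f x →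
      ∃ y : X, Shadows f ε y x ∧ AsympShadows f y x)

end Defs

/-! h-shadowing shadows finite pseudo-orbits with an exact endpoint, so shadows of consecutive
blocks can be glued backwards. Choose scales `e k → 0` such that `2 * e (k + 1)` is an
h-shadowing modulus for `e k`, and blocks on which the pseudo-orbit is an `e (k + 1)`-chain: the
`k`-th block is `e k`-shadowed by a point whose orbit then lands exactly on the shadow of the
later blocks. Compactness passes to the whole pseudo-orbit, which gives s-limit shadowing.

For limit shadowing, a tail of an asymptotic pseudo-orbit is asymptotically shadowed by some
`z`. Some iterate `w` of `z` nearly returns to itself, and running around this near-cycle shows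
with h-shadowing that `w` lies in the image of every iterate of `f`; a suitable preimage of `w`
then asymptotically shadows the whole sequence. -/

theorem exists_forall_iterate_mem {Y : Type*} [TopologicalSpace Y] [CompactSpace Y]
    {g : Y → Y} (hg : Continuous g) {s : ℕ → Set Y} (hs : ∀ i, IsClosed (s i))
    (h : ∀ m, ∃ y, ∀ i < m, g^[i] y ∈ s i) : ∃ y, ∀ i, g^[i] y ∈ s i := by
  let t : ℕ → Set Y := fun m => ⋂ i < m, g^[i] ⁻¹' s i
  have ht_closed : ∀ m, IsClosed (t m) := fun m =>
    isClosed_biInter fun i _ => (hs i).preimage (hg.iterate i)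
  obtain ⟨y, hy⟩ := IsCompact.nonempty_iInter_of_sequence_nonempty_isCompact_isClosed t
    (fun m => biInter_subset_biInter_left fun i hi => Nat.lt_succ_of_lt hi)
    (fun m => (h m).imp fun _ hy => mem_iInter₂.2 hy) (ht_closed 0).isCompact ht_closed
  exact ⟨y, fun i => mem_iInter₂.1 (mem_iInter.1 hy (i + 1)) i i.lt_succ_self⟩

section

variable {X : Type*} [MetricSpace X] {f : X → X}

def HShadowingWith (f : X → X) (δ ε : ℝ) : Prop :=
  ∀ (x : ℕ → X) (m : ℕ), (∀ i < m, dist (f (x i)) (x (i + 1)) < δ) →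
    ∃ y, (∀ i < m, dist (f^[i] y) (x i) < ε) ∧ f^[m] y = x m

theorem HShadowingOn.exists_hShadowingWith (hh : HShadowingOn f univ) :
    ∀ ε > 0, ∃ δ > 0, HShadowingWith f δ ε := fun ε hε =>
  (hh ε hε).imp fun _ ⟨hδ, h⟩ => ⟨hδ, fun x m => h x m fun _ _ => mem_univ _⟩

theorem HShadowingWith.mono {δ δ' ε : ℝ} (h : HShadowingWith f δ ε) (hδ : δ' ≤ δ) :
    HShadowingWith f δ' ε := fun x m hx =>
  h x m fun i hi => (hx i hi).trans_le hδ

theorem HShadowingWith.exists_iterate_eq {η ε : ℝ} (h : HShadowingWith f (2 * η) ε)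
    {x : ℕ → X} {m : ℕ} (hx : ∀ i < m, dist (f (x i)) (x (i + 1)) < η) {z : X}
    (hz : dist (x m) z < η) :
    ∃ y, (∀ i < m, dist (f^[i] y) (x i) < ε) ∧ f^[m] y = z := by
  have hη : 0 < η := dist_nonneg.trans_lt hz
  obtain ⟨y, hy, hym⟩ := h (Function.update x m z) m fun i hi => by
    rw [Function.update_of_ne hi.ne]
    rcases eq_or_ne (i + 1) m with rfl | hne
    · rw [Function.update_self]
      calc dist (f (x i)) z ≤ dist (f (x i)) (x (i + 1)) + dist (x (i + 1)) z :=
            dist_triangle _ _ _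
        _ < 2 * η := by linarith [hx i hi]
    · rw [Function.update_of_ne hne]
      linarith [hx i hi]
  refine ⟨y, fun i hi => ?_, by rwa [Function.update_self] at hym⟩
  simpa only [Function.update_of_ne hi.ne] using hy i hi

theorem exists_lt_and_dist_lt [CompactSpace X] (u : ℕ → X) {δ : ℝ} (hδ : 0 < δ) :
    ∃ p q, p < q ∧ dist (u q) (u p) < δ := by
  obtain ⟨_, -, φ, hφ, hconv⟩ := isCompact_univ.tendsto_subseq fun n => mem_univ (u n)
  obtain ⟨N, hN⟩ := Metric.cauchySeq_iff'.1 hconv.cauchySeq δ hδ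
  exact ⟨φ N, φ (N + 1), hφ N.lt_succ_self, hN (N + 1) N.le_succ⟩

theorem HShadowingWith.exists_shadow [CompactSpace X] (hf : Continuous f) {δ ε : ℝ}
    (h : HShadowingWith f δ ε) {x : ℕ → X} (hx : IsPseudoOrbit f δ x) :
    ∃ y, ∀ i, dist (f^[i] y) (x i) ≤ ε :=
  exists_forall_iterate_mem hf (fun i => isClosed_closedBall (x := x i) (ε := ε)) fun m =>
    (h x m fun i _ => hx i).imp fun _ hy i hi => (hy.1 i hi).le

/-- Running `k ↦ f^[k % ℓ] z` around the near-cycle `M` times and hitting its start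
exactly puts `z` in every iterated image. -/
theorem HShadowingWith.mem_range_iterate {δ ε : ℝ} (h : HShadowingWith f δ ε) {z : X} {ℓ : ℕ}
    (hℓ : 0 < ℓ) (hz : dist (f^[ℓ] z) z < δ) (M : ℕ) : z ∈ range f^[M] := by
  have hstep : ∀ i, dist (f (f^[i % ℓ] z)) (f^[(i + 1) % ℓ] z) < δ := by
    intro i
    rw [← Function.iterate_succ_apply' f, ← Nat.mod_add_mod]
    rcases Nat.lt_or_ge (i % ℓ + 1) ℓ with hlt | hge
    · rw [Nat.mod_eq_of_lt hlt, dist_self]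
      exact dist_nonneg.trans_lt hz
    · rwa [Nat.succ_eq_add_one, le_antisymm (Nat.mod_lt i hℓ) hge, Nat.mod_self]
  obtain ⟨y, -, hy⟩ := h (fun i => f^[i % ℓ] z) (ℓ * M) fun i _ => hstep i
  refine ⟨f^[ℓ * M - M] y, ?_⟩
  rw [← Function.iterate_add_apply, Nat.add_sub_cancel' (Nat.le_mul_of_pos_left M hℓ), hy,
    Nat.mul_mod_right, Function.iterate_zero_apply]

theorem HShadowingOn.exists_scales (hh : HShadowingOn f univ) {ε : ℝ} (hε : 0 < ε) :
    ∃ e : ℕ → ℝ, e 0 = ε ∧ (∀ k, 0 < e k) ∧ Antitone e ∧ Tendsto e atTop (𝓝 0) ∧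
      ∀ k, HShadowingWith f (2 * e (k + 1)) (e k) := by
  choose! D hD_pos hD using hh.exists_hShadowingWith
  set e : ℕ → ℝ := fun k => (fun t => min t (D t) / 2)^[k] ε
  have he_succ : ∀ k, e (k + 1) = min (e k) (D (e k)) / 2 := fun k =>
    Function.iterate_succ_apply' _ k ε
  have he_pos : ∀ k, 0 < e k := by
    intro k
    induction k with
    | zero => exact hε
    | succ k ih => rw [he_succ]; exact half_pos (lt_min ih (hD_pos _ ih))
  have he_half : ∀ k, e (k + 1) ≤ e k / 2 := fun k => by
    rw [he_succ]; gcongr; exact min_le_left _ _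
  have he_le : ∀ k, e k ≤ ε * (1 / 2) ^ k := by
    intro k
    induction k with
    | zero => simp [e]
    | succ k ih => rw [pow_succ]; linarith [he_half k]
  refine ⟨e, rfl, he_pos, antitone_nat_of_succ_le fun k => by linarith [he_half k, he_pos k],
    squeeze_zero (fun k => (he_pos k).le) he_le ?_, fun k => ?_⟩
  · have := tendsto_pow_atTop_nhds_zero_of_lt_one (r := (1 / 2 : ℝ)) (by norm_num) (by norm_num)
    simpa using this.const_mul ε
  · refine (hD _ (he_pos k)).mono ?_
    rw [he_succ]
    linarith [min_le_right (e k) (D (e k))]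

theorem exists_blocks {u r : ℕ → ℝ} (hu : Tendsto u atTop (𝓝 0)) (hr : ∀ k, 0 < r k)
    (hu₀ : ∀ i, u i < r 0) :
    ∃ n : ℕ → ℕ, StrictMono n ∧ n 0 = 0 ∧ ∀ k i, n k ≤ i → u i < r k := by
  obtain ⟨φ, hφ, hφu⟩ := extraction_forall_of_eventually' (P := fun k m => ∀ i ≥ m, u i < r k)
    fun k => (eventually_atTop.1 (hu.eventually (gt_mem_nhds (hr k)))).imp
      fun _ hN _ hm i hi => hN i (hm.trans hi)
  refine ⟨fun k => if k = 0 then 0 else φ k, strictMono_nat_of_lt_succ fun k => ?_, rfl,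
    fun k i hi => ?_⟩
  · rcases Nat.eq_zero_or_pos k with rfl | hk
    · simpa using (Nat.zero_le _).trans_lt (hφ zero_lt_one)
    · simpa [hk.ne'] using hφ k.lt_succ_self
  · rcases Nat.eq_zero_or_pos k with rfl | hk
    · exact hu₀ i
    · exact hφu k i (by simpa [hk.ne'] using hi)

theorem exists_shadow_of_blocks {e : ℕ → ℝ} (he_pos : ∀ k, 0 < e k) (he_anti : Antitone e)
    (hmod : ∀ k, HShadowingWith f (2 * e (k + 1)) (e k)) {n : ℕ → ℕ} (hn : StrictMono n)
    {x : ℕ → X} (hx : ∀ k i, n k ≤ i → dist (f (x i)) (x (i + 1)) < e (k + 1))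
    {K s : ℕ} (hsK : s ≤ K) :
    ∃ z, dist z (x (n s)) < e s ∧
      ∀ k i, s ≤ k → n k ≤ i → i < n K → dist (f^[i - n s] z) (x i) < e k := by
  induction hsK using Nat.decreasingInduction with
  | self =>
    refine ⟨x (n K), by simpa using he_pos K, fun k i hk hki hiK => ?_⟩
    exact absurd (hki.trans_lt hiK) (not_lt.2 (hn.monotone hk))
  | of_succ s hsK ih =>
    obtain ⟨z', hz', hz'_shadow⟩ := ih
    have hlt : n s < n (s + 1) := hn s.lt_succ_self
    have hm : n s + (n (s + 1) - n s) = n (s + 1) := Nat.add_sub_cancel' hlt.le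
    obtain ⟨z, hz, hzm⟩ := (hmod s).exists_iterate_eq (x := fun i => x (n s + i))
      (fun i _ => by simpa only [add_assoc] using hx s (n s + i) le_self_add)
      (by rwa [hm, dist_comm])
    refine ⟨z, by simpa using hz 0 (Nat.sub_pos_of_lt hlt), fun k i hk hki hiK => ?_⟩
    rcases lt_or_ge i (n (s + 1)) with hi | hi
    · obtain rfl : k = s := le_antisymm
        (Nat.le_of_lt_succ (hn.lt_iff_lt.1 (hki.trans_lt hi))) hk
      simpa only [Nat.add_sub_cancel' hki] using hz (i - n k) (by omega)
    · have hiter : f^[i - n s] z = f^[i - n (s + 1)] z' := by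
        rw [← hzm, ← Function.iterate_add_apply]
        congr 1
        omega
      rw [hiter]
      calc dist (f^[i - n (s + 1)] z') (x i) < e (max k (s + 1)) :=
            hz'_shadow _ i (le_max_right _ _)
              (by rw [hn.monotone.map_max]; exact max_le hki hi) hiK
        _ ≤ e k := he_anti (le_max_left _ _)

theorem exists_forall_dist_iterate_le_of_blocks [CompactSpace X] (hf : Continuous f)
    {e : ℕ → ℝ} (he_pos : ∀ k, 0 < e k) (he_anti : Antitone e)
    (hmod : ∀ k, HShadowingWith f (2 * e (k + 1)) (e k)) {n : ℕ → ℕ} (hn : StrictMono n)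
    {x : ℕ → X} (hx : ∀ k i, n k ≤ i → dist (f (x i)) (x (i + 1)) < e (k + 1))
    (hn₀ : n 0 = 0) : ∃ y, ∀ k i, n k ≤ i → dist (f^[i] y) (x i) ≤ e k := by
  obtain ⟨y, hy⟩ := exists_forall_iterate_mem hf
    (s := fun i => ⋂ k, ⋂ (_ : n k ≤ i), closedBall (x i) (e k))
    (fun i => isClosed_biInter fun _ _ => isClosed_closedBall) fun m => by
      obtain ⟨z, -, hz⟩ := exists_shadow_of_blocks he_pos he_anti hmod hn hx (Nat.zero_le m)
      refine ⟨z, fun i hi => mem_iInter₂.2 fun k hk => ?_⟩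
      simpa [hn₀] using (hz k i (Nat.zero_le k) hk (hi.trans_le hn.le_apply)).le
  exact ⟨y, fun k i hk => mem_iInter₂.1 (hy i) k hk⟩

theorem HShadowingOn.sLimitShadowingOn [CompactSpace X] (hf : Continuous f)
    (hh : HShadowingOn f univ) : SLimitShadowingOn f univ := by
  intro ε hε
  obtain ⟨e, he₀, he_pos, he_anti, he_lim, hmod⟩ := hh.exists_scales (half_pos hε)
  have hshadow : ∀ y x, (∀ i, dist (f^[i] y) (x i) ≤ e 0) → Shadows f ε y x :=
    fun y x hy i => (hy i).trans_lt (by linarith)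
  refine ⟨e 1, he_pos 1, fun x _ hx => ?_, fun x _ hx hax => ?_⟩
  · obtain ⟨y, hy⟩ := ((hmod 0).mono (by linarith [he_pos 1])).exists_shadow hf hx
    exact ⟨y, hshadow y x hy⟩
  · obtain ⟨n, hn, hn₀, hblocks⟩ := exists_blocks hax (fun k => he_pos (k + 1)) hx
    obtain ⟨y, hy⟩ := exists_forall_dist_iterate_le_of_blocks hf he_pos he_anti hmod hn hblocks hn₀
    refine ⟨y, hshadow y x fun i => hy 0 i (hn₀.symm ▸ Nat.zero_le i), ?_⟩
    refine tendsto_order.2 ⟨fun a ha => Eventually.of_forall fun i => ha.trans_le dist_nonneg,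
      fun a ha => ?_⟩
    obtain ⟨k, hk⟩ := (he_lim.eventually (gt_mem_nhds ha)).exists
    exact eventually_atTop.2 ⟨n k, fun i hi => (hy k i hi).trans_lt hk⟩

theorem IsAsymptoticOrbit.shift {x : ℕ → X} (hx : IsAsymptoticOrbit f x) (N : ℕ) :
    IsAsymptoticOrbit f (fun n => x (n + N)) := by
  have := (tendsto_add_atTop_iff_nat N).2 hx
  simpa only [IsAsymptoticOrbit, Nat.add_right_comm _ 1 N] using this

theorem IsAsymptoticOrbit.exists_isPseudoOrbit_shift {x : ℕ → X} (hx : IsAsymptoticOrbit f x)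
    {δ : ℝ} (hδ : 0 < δ) : ∃ N, IsPseudoOrbit f δ (fun n => x (n + N)) := by
  obtain ⟨N, hN⟩ := eventually_atTop.1 (hx.eventually (gt_mem_nhds hδ))
  exact ⟨N, fun n => by simpa only [Nat.add_right_comm _ 1 N] using hN (n + N) le_add_self⟩

theorem asympShadows_iterate_shift_iff {y : X} {x : ℕ → X} (k : ℕ) :
    AsympShadows f (f^[k] y) (fun n => x (n + k)) ↔ AsympShadows f y x := by
  simp only [AsympShadows, ← Function.iterate_add_apply]
  exact tendsto_add_atTop_iff_nat (f := fun n => dist (f^[n] y) (x n)) k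

theorem HShadowingWith.exists_iterate_mem_range_iterate [CompactSpace X] {δ ε : ℝ}
    (h : HShadowingWith f δ ε) (hδ : 0 < δ) (z : X) :
    ∃ p, ∀ M, f^[p] z ∈ range f^[M] := by
  obtain ⟨p, q, hpq, hd⟩ := exists_lt_and_dist_lt (fun n => f^[n] z) hδ
  refine ⟨p, h.mem_range_iterate (Nat.sub_pos_of_lt hpq) ?_⟩
  rwa [← Function.iterate_add_apply, Nat.sub_add_cancel hpq.le]

theorem limitShadowingOn_of_asympShadows [CompactSpace X] {δ : ℝ} (hδ : 0 < δ)
    (hs : ∀ x, IsPseudoOrbit f δ x → IsAsymptoticOrbit f x → ∃ y, AsympShadows f y x)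
    (hh : HShadowingOn f univ) : LimitShadowingOn f univ := by
  intro x _ hx
  obtain ⟨N, hxN⟩ := hx.exists_isPseudoOrbit_shift hδ
  obtain ⟨z, hz⟩ := hs _ hxN (hx.shift N)
  obtain ⟨δ₁, hδ₁, h₁⟩ := hh.exists_hShadowingWith 1 one_pos
  obtain ⟨p, hp⟩ := h₁.exists_iterate_mem_range_iterate hδ₁ z
  obtain ⟨y, hy⟩ := hp (p + N)
  refine ⟨y, (asympShadows_iterate_shift_iff (p + N)).1 ?_⟩
  rw [hy]
  simpa only [← add_assoc] using (asympShadows_iterate_shift_iff p).2 hz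

end

theorem stmt7 {X : Type*} [MetricSpace X] [CompactSpace X] (f : X → X)
    (hf : Continuous f) (hh : HShadowingOn f Set.univ) :
    SLimitShadowingOn f Set.univ ∧ LimitShadowingOn f Set.univ := by
  have hs := hh.sLimitShadowingOn hf
  obtain ⟨δ, hδ, -, has⟩ := hs 1 one_pos
  exact ⟨hs, limitShadowingOn_of_asympShadows hδ
    (fun x hx hax => (has x (fun _ => mem_univ _) hx hax).imp fun _ => And.right) hh⟩
end

section
/- Let (X,d) be a compact metric space and let f : X → X be continuous and positively expansive. Then the following are equivalent: f has shadowing; f has h-shadowing; f has s-limit shadowing. Moreover, if these hold then f also has limit shadowing. -/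
open Metric Filter Topology Set

section Defs

variable {X : Type*} [MetricSpace X]

/-- `f` is positively expansive. -/
def PositivelyExpansive (f : X → X) : Prop :=
  ∃ b > 0, ∀ x y : X, (∀ n : ℕ, dist (f^[n] x) (f^[n] y) < b) → x = y

end Defs

/-!
Expansivity makes shadowing points unique: two orbits that stay within half an expansivity
constant `b` of the same pseudo-orbit coincide. Hence a point shadowing the extension of a
finite pseudo-orbit by the orbit of its endpoint hits that endpoint exactly (h-shadowing), and
a point that eventually `b / 2`-shadows an asymptotic pseudo-orbit agrees, on every tail, with
the finer shadowing points of that tail, so it shadows asymptotically (s-limit shadowing).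
Conversely h-shadowing gives shadowing by compactness. For limit shadowing, the points of an
asymptotic pseudo-orbit `x` eventually lie arbitrarily close to `⋂ k, range f^[k]`, so for large
`M` some `f^[M] p` is close to `x M`; the orbit segment of `p` followed by the tail of `x` is then
a `δ`-pseudo-orbit, and a point shadowing it eventually `b / 2`-shadows `x`.
-/

section Shadowing

variable {X : Type*} [MetricSpace X] {f : X → X}

def IsExpansivityConstant (f : X → X) (b : ℝ) : Prop :=
  ∀ x y : X, (∀ n : ℕ, dist (f^[n] x) (f^[n] y) < b) → x = y

theorem tendsto_dist_zero_iff {ι : Type*} {l : Filter ι} {u v : ι → X} :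
    Tendsto (fun n => dist (u n) (v n)) l (𝓝 0) ↔ ∀ ε > 0, ∀ᶠ n in l, dist (u n) (v n) < ε := by
  simp only [Metric.tendsto_nhds, Real.dist_0_eq_abs, abs_of_nonneg dist_nonneg]

theorem UniformContinuous.tendsto_dist_comp {ι : Type*} {l : Filter ι} {g : X → X}
    (hg : UniformContinuous g) {u v : ι → X} (h : Tendsto (fun n => dist (u n) (v n)) l (𝓝 0)) :
    Tendsto (fun n => dist (g (u n)) (g (v n))) l (𝓝 0) := by
  have huv : Tendsto (fun n => (u n, v n)) l (uniformity X) :=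
    tendsto_uniformity_iff_dist_tendsto_zero.2 h
  exact tendsto_uniformity_iff_dist_tendsto_zero.1 (Tendsto.comp hg huv)

theorem Shadows.mono {ε ε' : ℝ} {y : X} {x : ℕ → X} (h : Shadows f ε y x) (hε : ε ≤ ε') :
    Shadows f ε' y x :=
  fun n => (h n).trans_le hε

theorem shadows_iterate_iff {ε : ℝ} {y : X} {x : ℕ → X} {N : ℕ} :
    Shadows f ε (f^[N] y) (fun n => x (n + N)) ↔ ∀ n ≥ N, dist (f^[n] y) (x n) < ε := by
  refine ⟨fun h n hn => ?_, fun h n => ?_⟩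
  · obtain ⟨k, rfl⟩ := Nat.exists_eq_add_of_le' hn
    simpa [Shadows, ← Function.iterate_add_apply] using h k
  · simpa [← Function.iterate_add_apply] using h (n + N) le_add_self

theorem IsExpansivityConstant.eq_of_shadows {b ε ε' : ℝ} (he : IsExpansivityConstant f b)
    {y z : X} {x : ℕ → X} (hy : Shadows f ε y x) (hz : Shadows f ε' z x) (h : ε + ε' ≤ b) :
    y = z :=
  he y z fun n => calc
    dist (f^[n] y) (f^[n] z) ≤ dist (f^[n] y) (x n) + dist (f^[n] z) (x n) := dist_triangle_right ..
    _ < ε + ε' := add_lt_add (hy n) (hz n)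
    _ ≤ b := h

theorem isPseudoOrbit_ite {δ : ℝ} {x y : ℕ → X} {m : ℕ}
    (hx : ∀ i, i + 1 < m → dist (f (x i)) (x (i + 1)) < δ)
    (hxy : ∀ i, i + 1 = m → dist (f (x i)) (y m) < δ)
    (hy : ∀ i ≥ m, dist (f (y i)) (y (i + 1)) < δ) :
    IsPseudoOrbit f δ (fun i => if i < m then x i else y i) := by
  intro i
  rcases lt_trichotomy (i + 1) m with h | h | h
  · simpa [h, (Nat.lt_succ_self i).trans h] using hx i h
  · simpa [← h] using hxy i h
  · simpa [show ¬i < m by omega, show ¬i + 1 < m by omega] using hy i (by omega)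

theorem ShadowingOn.hShadowingOn {b : ℝ} (hS : ShadowingOn f univ)
    (he : IsExpansivityConstant f b) (hb : 0 < b) : HShadowingOn f univ := by
  intro ε hε
  obtain ⟨δ, hδ, hshadow⟩ := hS (min ε (b / 2)) (lt_min hε (half_pos hb))
  refine ⟨δ, hδ, fun x m _ hx => ?_⟩
  set w : ℕ → X := fun i => if i < m then x i else f^[i - m] (x m)
  have hw : IsPseudoOrbit f δ w := isPseudoOrbit_ite (fun i hi => hx i (by omega))
    (fun i hi => by simpa [← hi] using hx i (by omega))
    (fun i hi => by simpa [Nat.sub_add_comm hi, Function.iterate_succ_apply'] using hδ)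
  obtain ⟨y, hy⟩ := hshadow w (fun _ => mem_univ _) hw
  refine ⟨y, fun i hi => by simpa [w, hi] using (hy.mono (min_le_left _ _)) i, ?_⟩
  have hym : Shadows f (b / 2) (f^[m] y) (fun n => f^[n] (x m)) := by
    simpa [w] using (shadows_iterate_iff (N := m)).2 fun n _ => (hy.mono (min_le_right _ _)) n
  exact he.eq_of_shadows hym (fun n => by simpa using half_pos hb) (add_halves b).le

theorem HShadowingOn.shadowingOn [CompactSpace X] (hf : Continuous f)
    (hH : HShadowingOn f univ) : ShadowingOn f univ := by
  intro ε hε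
  obtain ⟨δ, hδ, hH⟩ := hH (ε / 2) (half_pos hε)
  refine ⟨δ, hδ, fun x _ hx => ?_⟩
  choose y hy _ using fun m => hH x m (fun _ _ => mem_univ _) (fun i _ => hx i)
  obtain ⟨z, -, φ, hφ, hz⟩ := isCompact_univ.tendsto_subseq (fun m => mem_univ (y m))
  refine ⟨z, fun n => (half_lt_self hε).trans_le' ?_⟩
  refine le_of_tendsto ((((hf.iterate n).tendsto z).comp hz).dist tendsto_const_nhds) ?_
  filter_upwards [eventually_gt_atTop n] with k hk
  exact (hy (φ k) n (hk.trans_le (hφ.id_le k))).le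

theorem SLimitShadowingOn.shadowingOn {Y : Set X} (h : SLimitShadowingOn f Y) :
    ShadowingOn f Y := fun ε hε =>
  let ⟨δ, hδ, hshadow, _⟩ := h ε hε
  ⟨δ, hδ, hshadow⟩

theorem ShadowingOn.asympShadows_of_eventually {b : ℝ} (hS : ShadowingOn f univ)
    (he : IsExpansivityConstant f b) (hb : 0 < b) {x : ℕ → X} (hx : IsAsymptoticOrbit f x)
    {y : X} (hy : ∀ᶠ n in atTop, dist (f^[n] y) (x n) < b / 2) : AsympShadows f y x := by
  refine tendsto_dist_zero_iff.2 fun η hη => ?_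
  obtain ⟨δ, hδ, hshadow⟩ := hS (min η (b / 2)) (lt_min hη (half_pos hb))
  obtain ⟨N, hN⟩ := eventually_atTop.1 (hy.and (hx.eventually_lt_const hδ))
  have htail : IsPseudoOrbit f δ (fun n => x (n + N)) := fun n => by
    simpa [Nat.add_right_comm] using (hN (n + N) le_add_self).2
  obtain ⟨u, hu⟩ := hshadow _ (fun _ => mem_univ _) htail
  have hyN : Shadows f (b / 2) (f^[N] y) (fun n => x (n + N)) :=
    shadows_iterate_iff.2 fun n hn => (hN n hn).1
  have hu' : Shadows f η (f^[N] y) (fun n => x (n + N)) := by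
    rw [he.eq_of_shadows hyN hu (by linarith [min_le_right η (b / 2)])]
    exact hu.mono (min_le_left _ _)
  exact eventually_atTop.2 ⟨N, shadows_iterate_iff.1 hu'⟩

theorem ShadowingOn.sLimitShadowingOn {b : ℝ} (hS : ShadowingOn f univ)
    (he : IsExpansivityConstant f b) (hb : 0 < b) : SLimitShadowingOn f univ := by
  intro ε hε
  obtain ⟨δ, hδ, hshadow⟩ := hS (min ε (b / 2)) (lt_min hε (half_pos hb))
  refine ⟨δ, hδ, fun x hx hpo => (hshadow x hx hpo).imp fun y hy => hy.mono (min_le_left _ _),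
    fun x hx hpo hasym => ?_⟩
  obtain ⟨y, hy⟩ := hshadow x hx hpo
  exact ⟨y, hy.mono (min_le_left _ _), hS.asympShadows_of_eventually he hb hasym
    (Eventually.of_forall fun n => (hy.mono (min_le_right _ _)) n)⟩

theorem exists_range_iterate_subset_thickening [CompactSpace X] (hf : Continuous f) {ε : ℝ}
    (hε : 0 < ε) : ∃ m, range f^[m] ⊆ thickening ε (⋂ k, range f^[k]) := by
  have hanti : Antitone fun k => range f^[k] := fun i j hij => by
    obtain ⟨k, rfl⟩ := Nat.exists_eq_add_of_le hij
    show range f^[i + k] ⊆ range f^[i]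
    rw [Function.iterate_add]
    exact range_comp_subset_range _ _
  exact exists_subset_nhds_of_isCompact hanti.directed_ge
    (fun k => isCompact_range (hf.iterate k))
    (fun z hz => isOpen_thickening.mem_nhds (self_subset_thickening hε _ hz))

theorem IsAsymptoticOrbit.tendsto_dist_iterate [CompactSpace X] (hf : Continuous f)
    {x : ℕ → X} (hx : IsAsymptoticOrbit f x) (m : ℕ) :
    Tendsto (fun n => dist (f^[m] (x n)) (x (n + m))) atTop (𝓝 0) := by
  induction m with
  | zero => simp
  | succ m ih =>
    have hnear := (CompactSpace.uniformContinuous_of_continuous (hf.iterate m)).tendsto_dist_comp hx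
    refine squeeze_zero (fun _ => dist_nonneg) (fun n => ?_)
      (by simpa using hnear.add (ih.comp (tendsto_add_atTop_nat 1)))
    rw [Function.iterate_succ_apply, show n + (m + 1) = n + 1 + m by omega]
    exact dist_triangle _ _ _

theorem IsAsymptoticOrbit.eventually_exists_dist_iterate_lt [CompactSpace X] (hf : Continuous f)
    {x : ℕ → X} (hx : IsAsymptoticOrbit f x) {δ : ℝ} (hδ : 0 < δ) :
    ∀ᶠ M in atTop, ∃ p, dist (f^[M] p) (x M) < δ := by
  obtain ⟨m, hm⟩ := exists_range_iterate_subset_thickening hf (half_pos hδ)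
  obtain ⟨N, hN⟩ :=
    eventually_atTop.1 ((hx.tendsto_dist_iterate hf m).eventually_lt_const (half_pos hδ))
  refine eventually_atTop.2 ⟨N + m, fun M hM => ?_⟩
  obtain ⟨k, hk, hdist⟩ := mem_thickening_iff.1 (hm ⟨x (M - m), rfl⟩)
  obtain ⟨p, rfl⟩ := mem_iInter.1 hk M
  have hnear : dist (f^[m] (x (M - m))) (x M) < δ / 2 := by
    simpa [Nat.sub_add_cancel (le_of_add_le_right hM)] using hN (M - m) (by omega)
  refine ⟨p, ?_⟩
  calc dist (f^[M] p) (x M) ≤ dist (f^[M] p) (f^[m] (x (M - m))) + dist (f^[m] (x (M - m))) (x M) :=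
        dist_triangle _ _ _
    _ < δ / 2 + δ / 2 := add_lt_add (by rwa [dist_comm]) hnear
    _ = δ := add_halves δ

theorem ShadowingOn.limitShadowingOn [CompactSpace X] (hf : Continuous f) {b : ℝ}
    (hS : ShadowingOn f univ) (he : IsExpansivityConstant f b) (hb : 0 < b) :
    LimitShadowingOn f univ := by
  intro x _ hx
  obtain ⟨δ, hδ, hshadow⟩ := hS (b / 2) (half_pos hb)
  obtain ⟨N, hN⟩ := eventually_atTop.1 (hx.eventually_lt_const hδ)
  obtain ⟨M, ⟨p, hp⟩, hNM⟩ :=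
    ((hx.eventually_exists_dist_iterate_lt hf hδ).and (eventually_ge_atTop N)).exists
  set w : ℕ → X := fun i => if i < M then f^[i] p else x i
  have hw : IsPseudoOrbit f δ w := isPseudoOrbit_ite
    (fun i _ => by simpa [← Function.iterate_succ_apply' f i p] using hδ)
    (fun i hi => by simpa only [← hi, Function.iterate_succ_apply'] using hp)
    (fun i hi => hN i (hNM.trans hi))
  obtain ⟨y, hy⟩ := hshadow w (fun _ => mem_univ _) hw
  exact ⟨y, hS.asympShadows_of_eventually he hb hx
    (eventually_atTop.2 ⟨M, fun n hn => by simpa [w, not_lt.2 hn] using hy n⟩)⟩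

end Shadowing

theorem stmt12 {X : Type*} [MetricSpace X] [CompactSpace X] (f : X → X)
    (hf : Continuous f) (hexp : PositivelyExpansive f) :
    (ShadowingOn f Set.univ ↔ HShadowingOn f Set.univ) ∧
    (ShadowingOn f Set.univ ↔ SLimitShadowingOn f Set.univ) ∧
    (ShadowingOn f Set.univ → LimitShadowingOn f Set.univ) := by
  obtain ⟨b, hb, he⟩ := hexp
  exact ⟨⟨fun hS => hS.hShadowingOn he hb, fun hH => hH.shadowingOn hf⟩,
    ⟨fun hS => hS.sLimitShadowingOn he hb, SLimitShadowingOn.shadowingOn⟩,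
    fun hS => hS.limitShadowingOn hf he hb⟩
end
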